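/- arXiv:2410.07406 — 4 statements merged into one kernel-verified Lean document; each statement's English description precedes it below -/
import Mathlib

section
/- Let X be a compact metric space and (γ_n) a sequence of maps γ_n : X → X such that sup_n Lip(γ_n) < 1. Then there exists x* ∈ X such that for every x ∈ X, the compositions γ_1 ∘ γ_2 ∘ ⋯ ∘ γ_n (x) converge to x* as n → ∞. -/
/-!
The maps `γ₁ ∘ ⋯ ∘ γₙ` are `Kⁿ`-Lipschitz, so on a bounded space
`dist (γ₁ ∘ ⋯ ∘ γₙ x) (γ₁ ∘ ⋯ ∘ γₙ y) ≤ C Kⁿ` for all `x, y`. Taking `y = γₙ₊₁ x` shows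
that each orbit has geometrically small steps, hence is Cauchy and converges; taking `y`
arbitrary shows that all orbits share the same limit.
-/

/-- `leftComp f n = f 1 ∘ f 2 ∘ ⋯ ∘ f n` (applying `f n` first and `f 1` last). -/
def leftComp {α : Type*} (f : ℕ → α → α) : ℕ → α → α
  | 0 => id
  | n + 1 => leftComp f n ∘ f (n + 1)

open Filter Topology NNReal

section Contracting

variable {α : Type*} [PseudoMetricSpace α] {f : ℕ → α → α} {K : ℝ≥0}

theorem lipschitzWith_leftComp (hf : ∀ n, LipschitzWith K (f n)) (n : ℕ) :
    LipschitzWith (K ^ n) (leftComp f n) := by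
  induction n with
  | zero => exact LipschitzWith.id
  | succ n ih => rw [pow_succ]; exact ih.comp (hf (n + 1))

theorem dist_leftComp_le (hf : ∀ n, LipschitzWith K (f n)) {C : ℝ}
    (hC : ∀ a b : α, dist a b ≤ C) (n : ℕ) (x y : α) :
    dist (leftComp f n x) (leftComp f n y) ≤ C * K ^ n :=
  calc dist (leftComp f n x) (leftComp f n y)
      ≤ (K : ℝ) ^ n * dist x y := by
        exact_mod_cast (lipschitzWith_leftComp hf n).dist_le_mul x y
    _ ≤ K ^ n * C := by gcongr; exact hC x y
    _ = C * K ^ n := mul_comm _ _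

variable [BoundedSpace α]

theorem cauchySeq_leftComp (hf : ∀ n, LipschitzWith K (f n)) (hK : K < 1) (x : α) :
    CauchySeq (fun n => leftComp f n x) := by
  obtain ⟨C, hC⟩ := Metric.boundedSpace_iff.1 ‹BoundedSpace α›
  exact cauchySeq_of_le_geometric (K : ℝ) C hK fun n => dist_leftComp_le hf hC n x (f (n + 1) x)

theorem tendsto_dist_leftComp (hf : ∀ n, LipschitzWith K (f n)) (hK : K < 1) (x y : α) :
    Tendsto (fun n => dist (leftComp f n x) (leftComp f n y)) atTop (𝓝 0) := by
  obtain ⟨C, hC⟩ := Metric.boundedSpace_iff.1 ‹BoundedSpace α›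
  have hgeom : Tendsto (fun n => C * (K : ℝ) ^ n) atTop (𝓝 0) := by
    simpa using (tendsto_pow_atTop_nhds_zero_of_lt_one K.coe_nonneg hK).const_mul C
  exact squeeze_zero (fun _ => dist_nonneg) (dist_leftComp_le hf hC · x y) hgeom

theorem exists_tendsto_leftComp [CompleteSpace α] [Nonempty α]
    (hf : ∀ n, LipschitzWith K (f n)) (hK : K < 1) :
    ∃ xs : α, ∀ x : α, Tendsto (fun n => leftComp f n x) atTop (𝓝 xs) := by
  obtain ⟨x₀⟩ := ‹Nonempty α›
  obtain ⟨xs, hxs⟩ := cauchySeq_tendsto_of_complete (cauchySeq_leftComp hf hK x₀)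
  exact ⟨xs, fun x => hxs.congr_dist (tendsto_dist_leftComp hf hK x₀ x)⟩

end Contracting

theorem stmt0 {X : Type*} [MetricSpace X] [CompactSpace X] [Nonempty X]
    (γ : ℕ → X → X) (c : ℝ) (hc : c < 1)
    (hLip : ∀ n x y, dist (γ n x) (γ n y) ≤ c * dist x y) :
    ∃ xs : X, ∀ x : X,
      Filter.Tendsto (fun n => leftComp γ n x) Filter.atTop (nhds xs) :=
  exists_tendsto_leftComp (fun n => LipschitzWith.of_dist_le' (hLip n)) (Real.toNNReal_lt_one.2 hc)
end

section
/- For every k ≥ 1 and every λ > 0, the trace map T_k(x, y, z) = (x U_k(y) − z U_{k-1}(y), x U_{k-1}(y) − z U_{k-2}(y), y) preserves the cubic surface S_λ = { (x,y,z) ∈ ℝ³ : x² + y² + z² − 2xyz = 1 + λ²/4 }. That is, if (x,y,z) ∈ S_λ, then T_k(x,y,z) ∈ S_λ. -/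
/-- Shifted Chebyshev polynomials of the second kind: `cheb (k+1) = U_k`. -/
def cheb : ℕ → ℝ → ℝ
  | 0, _ => 0
  | 1, _ => 1
  | n + 2, y => 2 * y * cheb (n + 1) y - cheb n y

/-- The trace map `T_k` (here `cheb (k+1) = U_k`, `cheb k = U_{k-1}`, `cheb (k-1) = U_{k-2}`). -/
def traceMap (k : ℕ) : ℝ × ℝ × ℝ → ℝ × ℝ × ℝ := fun p =>
  (p.1 * cheb (k + 1) p.2.1 - p.2.2 * cheb k p.2.1,
   p.1 * cheb k p.2.1 - p.2.2 * cheb (k - 1) p.2.1,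
   p.2.1)

/-!
With `y` fixed, `I(x, y, z) = y² + Q_y(x, z)` for the binary quadratic form
`Q_y(x, z) = x² + z² − 2yxz`, and `I(T_k(x, y, z)) = y² + Q_y(a, b)` where `(a, b)` are the first two
coordinates of `T_k(x, y, z)`. By the Chebyshev recurrence, `(a, b)` is the image of `(x, z)`
under the `k`-th iterate of the linear map `(u, v) ↦ (2yu − v, u)`, which preserves `Q_y`.
-/

def chebForm (y : ℝ) (v : ℝ × ℝ) : ℝ := v.1 ^ 2 + v.2 ^ 2 - 2 * y * v.1 * v.2

def chebStep (y : ℝ) (v : ℝ × ℝ) : ℝ × ℝ := (2 * y * v.1 - v.2, v.1)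

lemma cheb_add_two (n : ℕ) (y : ℝ) : cheb (n + 2) y = 2 * y * cheb (n + 1) y - cheb n y := rfl

lemma chebForm_chebStep (y : ℝ) (v : ℝ × ℝ) : chebForm y (chebStep y v) = chebForm y v := by
  simp only [chebForm, chebStep]
  ring

lemma chebForm_iterate_chebStep (y : ℝ) (v : ℝ × ℝ) (n : ℕ) :
    chebForm y ((chebStep y)^[n] v) = chebForm y v := by
  induction n with
  | zero => rfl
  | succ n ih => rw [Function.iterate_succ_apply', chebForm_chebStep, ih]

lemma iterate_succ_chebStep (y x z : ℝ) (n : ℕ) :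
    (chebStep y)^[n + 1] (x, z) =
      (x * cheb (n + 2) y - z * cheb (n + 1) y, x * cheb (n + 1) y - z * cheb n y) := by
  induction n with
  | zero =>
    simp only [zero_add, Function.iterate_one, chebStep, cheb, Prod.mk.injEq]
    constructor <;> ring
  | succ n ih =>
    rw [Function.iterate_succ_apply', ih]
    simp only [chebStep, cheb_add_two, Prod.mk.injEq, and_true]
    ring

theorem stmt3_general (k : ℕ) (hk : 1 ≤ k) (lam : ℝ) (x y z : ℝ)
    (h : x ^ 2 + y ^ 2 + z ^ 2 - 2 * x * y * z = 1 + lam ^ 2 / 4) :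
    (traceMap k (x, y, z)).1 ^ 2 + (traceMap k (x, y, z)).2.1 ^ 2
      + (traceMap k (x, y, z)).2.2 ^ 2
      - 2 * (traceMap k (x, y, z)).1 * (traceMap k (x, y, z)).2.1
          * (traceMap k (x, y, z)).2.2
      = 1 + lam ^ 2 / 4 := by
  obtain ⟨n, rfl⟩ : ∃ n, k = n + 1 := ⟨k - 1, by omega⟩
  have hform := chebForm_iterate_chebStep y (x, z) (n + 1)
  rw [iterate_succ_chebStep] at hform
  simp only [traceMap, Nat.add_sub_cancel]
  simp only [chebForm] at hform
  linear_combination hform + h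

theorem stmt3 (k : ℕ) (hk : 1 ≤ k) (lam : ℝ) (hlam : 0 < lam) (x y z : ℝ)
    (h : x ^ 2 + y ^ 2 + z ^ 2 - 2 * x * y * z = 1 + lam ^ 2 / 4) :
    (traceMap k (x, y, z)).1 ^ 2 + (traceMap k (x, y, z)).2.1 ^ 2
      + (traceMap k (x, y, z)).2.2 ^ 2
      - 2 * (traceMap k (x, y, z)).1 * (traceMap k (x, y, z)).2.1
          * (traceMap k (x, y, z)).2.2
      = 1 + lam ^ 2 / 4 :=
  stmt3_general k hk lam x y z h
end

section
/- Let B > 0 and 0 < Δ < 1, and let L > B²/(1 − Δ). Suppose A : ℝ² → ℝ² is an invertible linear map, a : ℝ² → ℝ is a linear functional with ‖a‖ ≤ B, and b ∈ ℝ satisfies |b| ≤ Δ/‖A⁻¹‖ and ‖A⁻¹‖ ≤ B. Then the linear map F : ℝ² × ℝ → ℝ² × ℝ, F(v₁, v₂) = (A v₁, a(v₁) + b v₂), maps the cone K_L = {(v₁, v₂) : |v₂| ≤ L |v₁|} into itself. -/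
theorem stmt5 (B Δ L : ℝ) (hB : 0 < B) (hΔ0 : 0 < Δ) (hΔ1 : Δ < 1)
    (hL : B ^ 2 / (1 - Δ) < L)
    (A : EuclideanSpace ℝ (Fin 2) ≃L[ℝ] EuclideanSpace ℝ (Fin 2))
    (a : EuclideanSpace ℝ (Fin 2) →L[ℝ] ℝ) (b : ℝ)
    (ha : ‖a‖ ≤ B)
    (hAinv : ‖(A.symm : EuclideanSpace ℝ (Fin 2) →L[ℝ] EuclideanSpace ℝ (Fin 2))‖ ≤ B)
    (hb : |b| ≤ Δ / ‖(A.symm : EuclideanSpace ℝ (Fin 2) →L[ℝ] EuclideanSpace ℝ (Fin 2))‖) :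
    ∀ (v₁ : EuclideanSpace ℝ (Fin 2)) (v₂ : ℝ),
      |v₂| ≤ L * ‖v₁‖ → |a v₁ + b * v₂| ≤ L * ‖A v₁‖ := by
  intro v₁ v₂ hv
  set N := ‖(A.symm : EuclideanSpace ℝ (Fin 2) →L[ℝ] EuclideanSpace ℝ (Fin 2))‖ with hNdef
  have hN : 0 < N := by
    have : (A.symm : EuclideanSpace ℝ (Fin 2) →L[ℝ] EuclideanSpace ℝ (Fin 2)) ≠ 0 := by
      intro h
      have := congrArg (fun f => f (A (EuclideanSpace.single 0 (1:ℝ)))) h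
      simp at this
    exact norm_pos_iff.mpr this
  have hbN : |b| * N ≤ Δ := by
    rw [← le_div_iff₀ hN]; exact hb
  have hL0 : 0 < L := lt_of_le_of_lt (div_nonneg (sq_nonneg B) (by linarith)) hL
  have hB2 : B ^ 2 < L * (1 - Δ) := (div_lt_iff₀ (by linarith)).mp hL
  have hv1 : ‖v₁‖ ≤ N * ‖A v₁‖ := by
    calc ‖v₁‖ = ‖(A.symm : EuclideanSpace ℝ (Fin 2) →L[ℝ] EuclideanSpace ℝ (Fin 2)) (A v₁)‖ := by
          simp
      _ ≤ N * ‖A v₁‖ := ContinuousLinearMap.le_opNorm _ _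
  have hAv : (0:ℝ) ≤ ‖A v₁‖ := norm_nonneg _
  have hav : |a v₁| ≤ B * ‖v₁‖ := by
    calc |a v₁| ≤ ‖a‖ * ‖v₁‖ := a.le_opNorm v₁
      _ ≤ B * ‖v₁‖ := by gcongr
  have hbv : |b * v₂| ≤ |b| * (L * (N * ‖A v₁‖)) := by
    rw [abs_mul]
    have : |v₂| ≤ L * (N * ‖A v₁‖) := le_trans hv (by
      have := mul_le_mul_of_nonneg_left hv1 (le_of_lt hL0); linarith)
    exact mul_le_mul_of_nonneg_left this (abs_nonneg b)
  calc |a v₁ + b * v₂| ≤ |a v₁| + |b * v₂| := abs_add_le _ _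
    _ ≤ B * ‖v₁‖ + |b| * (L * (N * ‖A v₁‖)) := add_le_add hav hbv
    _ ≤ B * (N * ‖A v₁‖) + Δ * (L * ‖A v₁‖) := by
        have h1 : B * ‖v₁‖ ≤ B * (N * ‖A v₁‖) :=
          mul_le_mul_of_nonneg_left hv1 (le_of_lt hB)
        have h2 : |b| * (L * (N * ‖A v₁‖)) = (|b| * N) * (L * ‖A v₁‖) := by ring
        have h3 : (|b| * N) * (L * ‖A v₁‖) ≤ Δ * (L * ‖A v₁‖) :=
          mul_le_mul_of_nonneg_right hbN (by positivity)
        linarith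
    _ ≤ L * ‖A v₁‖ := by nlinarith [mul_le_mul_of_nonneg_right (mul_le_mul_of_nonneg_left hAinv hB.le) hAv, mul_le_mul_of_nonneg_right hB2.le hAv]
end

section
/- Let T, S be sets, and for n ∈ ℕ let F_n : T × S → T × S be of the form F_n(x,z) = (g_n(x), h_n(x,z)) with each g_n : T → T a bijection, and let K ⊆ T × S satisfy F_n(K) ⊆ K for all n. Suppose Γ_n denotes the associated graph transforms on sections whose graphs lie in K, and suppose σ* is a section such that for every section σ with graph in K, Γ_1 ∘ ⋯ ∘ Γ_n(σ) → σ* uniformly (S a metric space). If additionally the sets F_1 ∘ ⋯ ∘ F_n(K) are closed and their fibers over each x ∈ T are nonempty compact sets shrinking to a point, then ⋂_{n≥1} F_1 ∘ ⋯ ∘ F_n(K) = graph(σ*). -/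
theorem stmt9 {T S : Type*} [MetricSpace S] [CompleteSpace S]
    (g : ℕ → T ≃ T) (h : ℕ → T → S → S)
    (F : ℕ → T × S → T × S) (hF : ∀ n p, F n p = (g n p.1, h n p.1 p.2))
    (K : Set (T × S))
    (hKne : ∀ x, ∃ z, (x, z) ∈ K)
    (hKcl : ∀ x, IsClosed {z | (x, z) ∈ K})
    (hinv : ∀ n, F n '' K ⊆ K)
    (Γ : ℕ → (T → S) → (T → S))
    (hΓ : ∀ n (σ : T → S) x, Γ n σ x = h n ((g n).symm x) (σ ((g n).symm x)))
    (σs : T → S) (hσs : ∀ x, (x, σs x) ∈ K)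
    (hconv : ∀ σ : T → S, (∀ x, (x, σ x) ∈ K) →
      ∀ ε > (0 : ℝ), ∃ N, ∀ n ≥ N, ∀ x, dist (leftComp Γ n σ x) (σs x) ≤ ε)
    (hfib : ∀ n x, {z | (x, z) ∈ leftComp F (n + 1) '' K}.Nonempty ∧
      IsCompact {z | (x, z) ∈ leftComp F (n + 1) '' K})
    (hdiam : ∀ ε > (0 : ℝ), ∃ N, ∀ n ≥ N, ∀ x,
      Metric.diam {z | (x, z) ∈ leftComp F (n + 1) '' K} ≤ ε) :
    (⋂ n : ℕ, leftComp F (n + 1) '' K) = {p : T × S | p.2 = σs p.1} := by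
  -- graph transform lemma for a single map
  have hone : ∀ n (σ : T → S),
      F n '' {p : T × S | p.2 = σ p.1} = {p : T × S | p.2 = Γ n σ p.1} := by
    intro n σ
    ext ⟨x, z⟩
    constructor
    · rintro ⟨⟨y, w⟩, hw, heq⟩
      simp only [Set.mem_setOf_eq] at hw
      rw [hF] at heq
      simp only [Prod.mk.injEq] at heq
      obtain ⟨hx, hz⟩ := heq
      simp only [Set.mem_setOf_eq]
      rw [hΓ, ← hx, Equiv.symm_apply_apply, ← hz, hw]
    · intro hz
      simp only [Set.mem_setOf_eq] at hz
      refine ⟨((g n).symm x, σ ((g n).symm x)), rfl, ?_⟩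
      rw [hF]
      simp [hz, hΓ]
  -- iterated graph transform lemma
  have hgraph : ∀ n (σ : T → S),
      leftComp F n '' {p : T × S | p.2 = σ p.1} = {p : T × S | p.2 = leftComp Γ n σ p.1} := by
    intro n
    induction n with
    | zero => intro σ; simp [leftComp]
    | succ n ih =>
      intro σ
      rw [show leftComp F (n + 1) = leftComp F n ∘ F (n + 1) from rfl, Set.image_comp,
        hone, ih]
      rfl
  -- monotonicity of the images
  have hmono : ∀ n m, n ≤ m → leftComp F m '' K ⊆ leftComp F n '' K := by
    intro n m hnm
    induction m, hnm using Nat.le_induction with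
    | base => exact subset_rfl
    | succ m hm ih =>
      refine subset_trans ?_ ih
      rw [show leftComp F (m + 1) = leftComp F m ∘ F (m + 1) from rfl, Set.image_comp]
      exact Set.image_mono (hinv (m + 1))
  -- graph of σs is contained in K
  have hgK : {p : T × S | p.2 = σs p.1} ⊆ K := by
    rintro ⟨a, b⟩ hb
    simp only [Set.mem_setOf_eq] at hb
    exact hb ▸ hσs a
  -- the iterated graph transform of σs lies in the iterated images
  have hmem : ∀ m x, (x, leftComp Γ m σs x) ∈ leftComp F m '' K := by
    intro m x
    have h1 : (x, leftComp Γ m σs x) ∈ {p : T × S | p.2 = leftComp Γ m σs p.1} := rfl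
    rw [← hgraph] at h1
    exact Set.image_mono hgK h1
  -- σs lies in every fiber
  have hin : ∀ n x, (x, σs x) ∈ leftComp F (n + 1) '' K := by
    intro n x
    have htend : Filter.Tendsto (fun m => leftComp Γ m σs x) Filter.atTop (nhds (σs x)) := by
      rw [Metric.tendsto_atTop]
      intro ε hε
      obtain ⟨N, hN⟩ := hconv σs hσs (ε / 2) (by linarith)
      exact ⟨N, fun m hm => lt_of_le_of_lt (hN m hm x) (by linarith)⟩
    have hcl : IsClosed {z | (x, z) ∈ leftComp F (n + 1) '' K} := (hfib n x).2.isClosed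
    have : σs x ∈ {z | (x, z) ∈ leftComp F (n + 1) '' K} := by
      apply hcl.mem_of_tendsto htend
      filter_upwards [Filter.eventually_ge_atTop (n + 1)] with m hm
      exact hmono (n + 1) m hm (hmem m x)
    exact this
  ext ⟨x, z⟩
  simp only [Set.mem_iInter, Set.mem_setOf_eq]
  constructor
  · intro hp
    have hd : ∀ ε > (0 : ℝ), dist z (σs x) ≤ ε := by
      intro ε hε
      obtain ⟨N, hN⟩ := hdiam ε hε
      have hb : Bornology.IsBounded {w | (x, w) ∈ leftComp F (N + 1) '' K} :=
        (hfib N x).2.isBounded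
      calc dist z (σs x) ≤ Metric.diam {w | (x, w) ∈ leftComp F (N + 1) '' K} :=
            Metric.dist_le_diam_of_mem hb (hp N) (hin N x)
        _ ≤ ε := hN N le_rfl x
    have h0 : dist z (σs x) ≤ 0 := by
      refine le_of_forall_pos_le_add fun ε hε => ?_
      simpa using hd ε hε
    exact eq_of_dist_eq_zero (le_antisymm h0 dist_nonneg)
  · intro hz n
    exact hz ▸ hin n x
end
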